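/- arXiv:math/9910031 — 7 statements merged into one kernel-verified Lean document; each statement's English description precedes it below -/
import Mathlib

section
/- Let B be an associative unital ℂ-algebra in which the operations + and ∩ on the set of two-sided ideals are distributive with respect to each other, i.e. (I + J) ∩ K = (I ∩ K) + (J ∩ K) for all two-sided ideals I, J, K of B. Then every covering of B is complete. -/
/-!
If `a` solves the system `a ≡ b i (mod J i)` for `i ∈ s`, then by compatibility
`a - b j ∈ ⋂_{i ∈ s} (J i + J j)`, which distributivity turns into
`(⋂_{i ∈ s} J i) + J j`.
Subtracting the `⋂_{i ∈ s} J i`-component from `a` gives a solution on `s ∪ {j}`;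
induction on `s` solves the whole system.
-/

namespace TwoSidedIdeal

variable {R : Type*} [NonUnitalNonAssocRing R] {ι : Type*}

lemma mem_finset_inf {s : Finset ι} {J : ι → TwoSidedIdeal R} {x : R} :
    x ∈ s.inf J ↔ ∀ i ∈ s, x ∈ J i := by
  classical
  induction s using Finset.induction with
  | empty => simp
  | insert j s _ ih => simp [mem_inf, ih]

lemma exists_sub_mem_insert [DecidableEq ι] {J : ι → TwoSidedIdeal R} {b : ι → R}
    {s : Finset ι} {j : ι} {a : R} (ha : ∀ i ∈ s, a - b i ∈ J i)
    (haj : a - b j ∈ s.inf J ⊔ J j) :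
    ∃ a' : R, ∀ i ∈ insert j s, a' - b i ∈ J i := by
  obtain ⟨u, hu, v, hv, huv⟩ := mem_sup.1 haj
  refine ⟨a - u, fun i hi => ?_⟩
  rcases Finset.mem_insert.1 hi with rfl | hi
  · rwa [show a - u - b i = v by rw [sub_right_comm, ← huv]; abel]
  · rw [sub_right_comm]
    exact sub_mem _ (ha i hi) (mem_finset_inf.1 hu i hi)

lemma finset_inf_sup_eq
    (hdist : ∀ I J K : TwoSidedIdeal R, (I ⊔ J) ⊓ K = (I ⊓ K) ⊔ (J ⊓ K))
    (s : Finset ι) (J : ι → TwoSidedIdeal R) (K : TwoSidedIdeal R) :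
    s.inf J ⊔ K = s.inf fun i => J i ⊔ K := by
  let _ : DistribLattice (TwoSidedIdeal R) := DistribLattice.ofInfSupLe fun I J K => by
    rw [inf_comm, hdist, inf_comm I J, inf_comm I K]
  exact Finset.inf_sup_distrib_right s J K

lemma sub_mem_finset_inf_sup
    (hdist : ∀ I J K : TwoSidedIdeal R, (I ⊔ J) ⊓ K = (I ⊓ K) ⊔ (J ⊓ K))
    {J : ι → TwoSidedIdeal R} {b : ι → R}
    (hcompat : ∀ i j, b i - b j ∈ J i ⊔ J j) {s : Finset ι} {a : R}
    (ha : ∀ i ∈ s, a - b i ∈ J i) (j : ι) :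
    a - b j ∈ s.inf J ⊔ J j := by
  rw [finset_inf_sup_eq hdist, mem_finset_inf]
  intro i hi
  rw [← sub_add_sub_cancel a (b i) (b j)]
  exact add_mem _ (mem_sup_left (ha i hi)) (hcompat i j)

theorem exists_forall_sub_mem_of_sub_mem_sup
    (hdist : ∀ I J K : TwoSidedIdeal R, (I ⊔ J) ⊓ K = (I ⊓ K) ⊔ (J ⊓ K))
    {J : ι → TwoSidedIdeal R} {b : ι → R}
    (hcompat : ∀ i j, b i - b j ∈ J i ⊔ J j) (s : Finset ι) :
    ∃ a : R, ∀ i ∈ s, a - b i ∈ J i := by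
  classical
  induction s using Finset.induction with
  | empty => exact ⟨0, by simp⟩
  | @insert j s _ ih =>
    obtain ⟨a, ha⟩ := ih
    exact exists_sub_mem_insert ha (sub_mem_finset_inf_sup hdist hcompat ha j)

end TwoSidedIdeal

theorem covering_complete_of_distributive_general
    {B : Type*} [Ring B]
    (hdist : ∀ I J K : TwoSidedIdeal B, (I ⊔ J) ⊓ K = (I ⊓ K) ⊔ (J ⊓ K)) :
    ∀ (ι : Type) [Fintype ι] (𝒥 : ι → TwoSidedIdeal B),
      (∀ x : B, (∀ i, x ∈ 𝒥 i) → x = 0) →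
      ∀ b : ι → B,
        (∀ i j, ∃ u ∈ 𝒥 i, ∃ v ∈ 𝒥 j, b i - b j = u + v) →
        ∃ a : B, ∀ i, a - b i ∈ 𝒥 i := by
  intro ι _ 𝒥 _ b hcompat
  have hcompat' : ∀ i j, b i - b j ∈ 𝒥 i ⊔ 𝒥 j := fun i j => by
    obtain ⟨u, hu, v, hv, huv⟩ := hcompat i j
    exact TwoSidedIdeal.mem_sup.2 ⟨u, hu, v, hv, huv.symm⟩
  obtain ⟨a, ha⟩ :=
    TwoSidedIdeal.exists_forall_sub_mem_of_sub_mem_sup hdist hcompat' Finset.univ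
  exact ⟨a, fun i => ha i (Finset.mem_univ i)⟩

/-- If the operations `+` (= `⊔`) and `∩` (= `⊓`) on the set of two-sided
ideals of an associative unital ℂ-algebra `B` are distributive with respect to each other,
then every (finite) covering of `B` is complete. -/
theorem covering_complete_of_distributive
    {B : Type*} [Ring B] [Algebra ℂ B]
    (hdist : ∀ I J K : TwoSidedIdeal B, (I ⊔ J) ⊓ K = (I ⊓ K) ⊔ (J ⊓ K)) :
    ∀ (ι : Type) [Fintype ι] (𝒥 : ι → TwoSidedIdeal B),
      (∀ x : B, (∀ i, x ∈ 𝒥 i) → x = 0) →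
      ∀ b : ι → B,
        (∀ i j, ∃ u ∈ 𝒥 i, ∃ v ∈ 𝒥 j, b i - b j = u + v) →
        ∃ a : B, ∀ i, a - b i ∈ 𝒥 i :=
  covering_complete_of_distributive_general hdist
end

section
/- Let B be an associative unital ℂ-algebra and let (J₁, …, J_n) be a covering of B by two-sided ideals such that for every k ∈ {1, …, n} one has ⋂_{i=1}^{k−1}(J_i + J_k) = (⋂_{i=1}^{k−1} J_i) + J_k. Then the covering (J₁, …, J_n) is complete. -/
/-- Let `(J 1, …, J n)` be a covering of the associative unital ℂ-algebra `B`
by two-sided ideals such that for every `k`,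
`⋂_{i<k} (J i + J k) = (⋂_{i<k} J i) + J k`
(sums of two-sided ideals being their lattice sups).  Then the covering is complete. -/
theorem covering_complete_of_partial_distributivity
    {B : Type*} [Ring B] [Algebra ℂ B] {n : ℕ} (J : Fin n → TwoSidedIdeal B)
    (hcov : ∀ x : B, (∀ i, x ∈ J i) → x = 0)
    (hdist : ∀ k : Fin n,
      (⨅ i : {i : Fin n // i < k}, (J i.1 ⊔ J k)) =
        (⨅ i : {i : Fin n // i < k}, J i.1) ⊔ J k) :
    ∀ b : Fin n → B,
      (∀ i j, ∃ u ∈ J i, ∃ v ∈ J j, b i - b j = u + v) →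
      ∃ a : B, ∀ i, a - b i ∈ J i := by
  intro b hb
  suffices h : ∀ m : ℕ, m ≤ n → ∃ a : B, ∀ i : Fin n, (i : ℕ) < m → a - b i ∈ J i by
    obtain ⟨a, ha⟩ := h n le_rfl
    exact ⟨a, fun i => ha i i.isLt⟩
  intro m
  induction m with
  | zero => exact fun _ => ⟨0, fun i hi => absurd hi (Nat.not_lt_zero _)⟩
  | succ m ih =>
    intro hm
    obtain ⟨a, ha⟩ := ih (Nat.le_of_succ_le hm)
    set k : Fin n := ⟨m, hm⟩
    have hmem : a - b k ∈ ⨅ i : {i : Fin n // i < k}, (J i.1 ⊔ J k) := by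
      rw [TwoSidedIdeal.mem_iInf]
      rintro ⟨i, hik⟩
      obtain ⟨u, hu, v, hv, huv⟩ := hb i k
      have h1 : a - b i ∈ J i := ha i hik
      have heq : a - b k = (a - b i) + (b i - b k) := by abel
      rw [heq, huv, ← add_assoc]
      exact TwoSidedIdeal.add_mem _
        (TwoSidedIdeal.add_mem _ (TwoSidedIdeal.mem_sup_left h1) (TwoSidedIdeal.mem_sup_left hu))
        (TwoSidedIdeal.mem_sup_right hv)
    rw [hdist k, TwoSidedIdeal.mem_sup] at hmem
    obtain ⟨u, hu, v, hv, huv⟩ := hmem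
    rw [TwoSidedIdeal.mem_iInf] at hu
    refine ⟨a - u, fun i hi => ?_⟩
    rcases Nat.lt_succ_iff_lt_or_eq.mp hi with hi | hi
    · have heq : a - u - b i = (a - b i) - u := by abel
      rw [heq]
      exact TwoSidedIdeal.sub_mem _ (ha i hi) (hu ⟨i, hi⟩)
    · have hik : i = k := Fin.ext hi
      rw [hik]
      have h2 : v = a - b k - u := by rw [eq_sub_iff_add_eq, add_comm]; exact huv
      have heq : a - u - b k = v := by rw [h2]; abel
      rw [heq]; exact hv
end

section
/- Let B be an associative unital ℂ-algebra and let (J_i)_{i∈I} be a complete covering of B by two-sided ideals. Then for every k ∈ I one has ⋂_{i ≠ k}(J_i + J_k) = (⋂_{i ≠ k} J_i) + J_k. -/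
/-- If `(J i)_{i ∈ ι}` is a complete covering of the associative unital
ℂ-algebra `B` by two-sided ideals, then for every `k`,
`⋂_{i ≠ k} (J i + J k) = (⋂_{i ≠ k} J i) + J k`
(sums of two-sided ideals being their lattice sups). -/
theorem distributivity_of_complete_covering
    {B : Type*} [Ring B] [Algebra ℂ B] {ι : Type} [Fintype ι]
    (J : ι → TwoSidedIdeal B)
    (hcov : ∀ x : B, (∀ i, x ∈ J i) → x = 0)
    (hcomplete : ∀ b : ι → B,
      (∀ i j, ∃ u ∈ J i, ∃ v ∈ J j, b i - b j = u + v) →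
      ∃ a : B, ∀ i, a - b i ∈ J i) :
    ∀ k : ι,
      (⨅ i : {i : ι // i ≠ k}, (J i.1 ⊔ J k)) =
        (⨅ i : {i : ι // i ≠ k}, J i.1) ⊔ J k := by
  intro k
  apply le_antisymm
  · intro x hx
    rw [TwoSidedIdeal.mem_iInf] at hx
    classical
    set b : ι → B := fun i => if i = k then 0 else x with hb
    have hbc : ∀ i j, ∃ u ∈ J i, ∃ v ∈ J j, b i - b j = u + v := by
      intro i j
      by_cases hi : i = k <;> by_cases hj : j = k <;>
        simp only [hb, hi, hj, if_pos, if_neg, if_true, if_false]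
      · exact ⟨0, zero_mem _, 0, zero_mem _, by simp⟩
      · obtain ⟨u, hu, v, hv, huv⟩ := TwoSidedIdeal.mem_sup.mp (hx ⟨j, hj⟩)
        exact ⟨-v, TwoSidedIdeal.neg_mem _ (hi ▸ hv), -u, TwoSidedIdeal.neg_mem _ hu, by
          simp only [zero_sub]; rw [← neg_add, add_comm, ← huv]⟩
      · obtain ⟨u, hu, v, hv, huv⟩ := TwoSidedIdeal.mem_sup.mp (hx ⟨i, hi⟩)
        exact ⟨u, hu, v, hj ▸ hv, by simpa using huv.symm⟩
      · exact ⟨0, zero_mem _, 0, zero_mem _, by simp⟩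
    obtain ⟨a, ha⟩ := hcomplete b hbc
    rw [TwoSidedIdeal.mem_sup]
    refine ⟨x - a, ?_, a, ?_, sub_add_cancel x a⟩
    · rw [TwoSidedIdeal.mem_iInf]
      intro i
      have := ha i.1
      simp only [hb, if_neg i.2] at this
      simpa using TwoSidedIdeal.neg_mem _ this
    · have := ha k
      simpa [hb] using this
  · apply sup_le
    · exact le_iInf fun i => le_trans (iInf_le _ i) le_sup_left
    · exact le_iInf fun i => le_sup_right
end

section
/- Let B be an associative unital ℂ-algebra and let (J₁, J₂, J₃) be a covering of B by three two-sided ideals. The following conditions are equivalent: (i) the covering (J₁, J₂, J₃) is complete; (ii) (J_i + J_k) ∩ (J_j + J_k) = (J_i ∩ J_j) + J_k for some permutation (i, j, k) of (1, 2, 3); (iii) (J_i + J_k) ∩ (J_j + J_k) = (J_i ∩ J_j) + J_k for every permutation (i, j, k) of (1, 2, 3). -/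
private lemma fin3_perm_cases (σ : Equiv.Perm (Fin 3)) (i : Fin 3) :
    i = σ 0 ∨ i = σ 1 ∨ i = σ 2 := by
  have hall : ∀ m : Fin 3, m = 0 ∨ m = 1 ∨ m = 2 := by decide
  have h := σ.apply_symm_apply i
  rcases hall (σ.symm i) with hm | hm | hm <;> rw [hm] at h
  · exact Or.inl h.symm
  · exact Or.inr (Or.inl h.symm)
  · exact Or.inr (Or.inr h.symm)

/-- Element-level modular-lattice step: if `(Ji ⊔ Jk) ⊓ (Jj ⊔ Jk) = (Ji ⊓ Jj) ⊔ Jk`,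
then any element of `Jk` of the form `u + v` with `u ∈ Ji`, `v ∈ Jj` decomposes as
a sum of an element of `Ji ⊓ Jk` and an element of `Jj ⊓ Jk`. -/
private lemma modular_step {B : Type*} [Ring B] (Ji Jj Jk : TwoSidedIdeal B)
    (H : (Ji ⊔ Jk) ⊓ (Jj ⊔ Jk) = (Ji ⊓ Jj) ⊔ Jk)
    {x u v : B} (hxk : x ∈ Jk) (hu : u ∈ Ji) (hv : v ∈ Jj) (hx : x = u + v) :
    ∃ z, z ∈ Ji ∧ z ∈ Jk ∧ ∃ m, m ∈ Jj ∧ m ∈ Jk ∧ x = z + m := by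
  have hu2 : u ∈ (Ji ⊔ Jk) ⊓ (Jj ⊔ Jk) := by
    rw [TwoSidedIdeal.mem_inf]
    refine ⟨TwoSidedIdeal.mem_sup_left hu, ?_⟩
    exact TwoSidedIdeal.mem_sup.mpr ⟨-v, Jj.neg_mem hv, x, hxk, by rw [hx]; abel⟩
  rw [H] at hu2
  obtain ⟨w, hw, z, hz, hwz⟩ := TwoSidedIdeal.mem_sup.mp hu2
  rw [TwoSidedIdeal.mem_inf] at hw
  have hzi : z ∈ Ji := by
    have : z = u - w := by rw [← hwz]; abel
    rw [this]; exact Ji.sub_mem hu hw.1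
  refine ⟨z, hzi, hz, x - z, ?_, Jk.sub_mem hxk hz, by abel⟩
  have : x - z = w + v := by rw [hx, ← hwz]; abel
  rw [this]; exact Jj.add_mem hw.2 hv

/-- Some-permutation distributivity implies completeness. -/
private lemma perm_eq_imp_complete {B : Type*} [Ring B] (J : Fin 3 → TwoSidedIdeal B)
    (σ : Equiv.Perm (Fin 3))
    (H : (J (σ 0) ⊔ J (σ 2)) ⊓ (J (σ 1) ⊔ J (σ 2)) = (J (σ 0) ⊓ J (σ 1)) ⊔ J (σ 2))
    (b : Fin 3 → B)
    (hb : ∀ i j, ∃ u ∈ J i, ∃ v ∈ J j, b i - b j = u + v) :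
    ∃ a : B, ∀ i, a - b i ∈ J i := by
  obtain ⟨pi, hpi, qi, hqi, hik⟩ := hb (σ 0) (σ 2)
  obtain ⟨pj, hpj, qj, hqj, hjk⟩ := hb (σ 1) (σ 2)
  obtain ⟨u, hu, v, hv, hij⟩ := hb (σ 0) (σ 1)
  have hxk : qi - qj ∈ J (σ 2) := (J (σ 2)).sub_mem hqi hqj
  have hxuv : qi - qj = (u - pi) + (v + pj) := by
    have h1 : qi = (b (σ 0) - b (σ 2)) - pi := by rw [hik]; abel
    have h2 : qj = (b (σ 1) - b (σ 2)) - pj := by rw [hjk]; abel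
    rw [h1, h2]
    have : b (σ 0) - b (σ 1) = u + v := hij
    calc (b (σ 0) - b (σ 2) - pi) - (b (σ 1) - b (σ 2) - pj)
        = (b (σ 0) - b (σ 1)) - pi + pj := by abel
      _ = (u - pi) + (v + pj) := by rw [this]; abel
  obtain ⟨z, hzi, hzk, m, hmj, hmk, hzm⟩ :=
    modular_step (J (σ 0)) (J (σ 1)) (J (σ 2)) H hxk
      ((J (σ 0)).sub_mem hu hpi) ((J (σ 1)).add_mem hv hpj) hxuv
  refine ⟨b (σ 2) + (qi - z), ?_⟩
  have h0 : b (σ 2) + (qi - z) - b (σ 0) ∈ J (σ 0) := by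
    have hb0 : b (σ 0) = pi + qi + b (σ 2) := by rw [← hik]; abel
    have : b (σ 2) + (qi - z) - b (σ 0) = -pi - z := by rw [hb0]; abel
    rw [this]; exact (J (σ 0)).sub_mem ((J (σ 0)).neg_mem hpi) hzi
  have h1 : b (σ 2) + (qi - z) - b (σ 1) ∈ J (σ 1) := by
    have hb1 : b (σ 1) = pj + qj + b (σ 2) := by rw [← hjk]; abel
    have hqi' : qi = z + m + qj := by rw [← hzm]; abel
    have : b (σ 2) + (qi - z) - b (σ 1) = m - pj := by rw [hb1, hqi']; abel
    rw [this]; exact (J (σ 1)).sub_mem hmj hpj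
  have h2 : b (σ 2) + (qi - z) - b (σ 2) ∈ J (σ 2) := by
    have : b (σ 2) + (qi - z) - b (σ 2) = qi - z := by abel
    rw [this]; exact (J (σ 2)).sub_mem hqi hzk
  intro i
  rcases fin3_perm_cases σ i with h | h | h <;> rw [h]
  exacts [h0, h1, h2]

/-- Completeness implies distributivity for every permutation. -/
private lemma complete_imp_perm_eq {B : Type*} [Ring B] (J : Fin 3 → TwoSidedIdeal B)
    (hP : ∀ b : Fin 3 → B,
        (∀ i j, ∃ u ∈ J i, ∃ v ∈ J j, b i - b j = u + v) →
        ∃ a : B, ∀ i, a - b i ∈ J i)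
    (σ : Equiv.Perm (Fin 3)) :
    (J (σ 0) ⊔ J (σ 2)) ⊓ (J (σ 1) ⊔ J (σ 2)) = (J (σ 0) ⊓ J (σ 1)) ⊔ J (σ 2) := by
  refine le_antisymm ?_ ?_
  · intro x hx
    rw [TwoSidedIdeal.mem_inf] at hx
    have hne0 : σ 0 ≠ σ 2 := fun h => by simpa using σ.injective h
    have hne1 : σ 1 ≠ σ 2 := fun h => by simpa using σ.injective h
    have hmem : ∀ m : Fin 3, m ≠ σ 2 → x ∈ J m ⊔ J (σ 2) := by
      intro m hm
      rcases fin3_perm_cases σ m with h | h | h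
      · rw [h]; exact hx.1
      · rw [h]; exact hx.2
      · exact absurd h hm
    set b : Fin 3 → B := fun m => if m = σ 2 then 0 else x with hbdef
    have hbi : ∀ m, b m = if m = σ 2 then 0 else x := fun m => rfl
    have hcompat : ∀ i j, ∃ u ∈ J i, ∃ v ∈ J j, b i - b j = u + v := by
      intro i j
      by_cases hi : i = σ 2 <;> by_cases hj : j = σ 2
      · exact ⟨0, (J i).zero_mem, 0, (J j).zero_mem, by
          rw [hbi, hbi, if_pos hi, if_pos hj]; simp⟩
      · obtain ⟨y, hy, z, hz, hyz⟩ := TwoSidedIdeal.mem_sup.mp (hmem j hj)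
        refine ⟨-z, ?_, -y, (J j).neg_mem hy, ?_⟩
        · rw [hi]; exact (J (σ 2)).neg_mem hz
        · rw [hbi, hbi, if_pos hi, if_neg hj, ← hyz]; abel
      · obtain ⟨y, hy, z, hz, hyz⟩ := TwoSidedIdeal.mem_sup.mp (hmem i hi)
        refine ⟨y, hy, z, ?_, ?_⟩
        · rw [hj]; exact hz
        · rw [hbi, hbi, if_neg hi, if_pos hj, ← hyz]; abel
      · exact ⟨0, (J i).zero_mem, 0, (J j).zero_mem, by
          rw [hbi, hbi, if_neg hi, if_neg hj]; simp⟩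
    obtain ⟨a, ha⟩ := hP b hcompat
    have ha0 : a - x ∈ J (σ 0) := by
      have h := ha (σ 0); rwa [hbi, if_neg hne0] at h
    have ha1 : a - x ∈ J (σ 1) := by
      have h := ha (σ 1); rwa [hbi, if_neg hne1] at h
    have ha2 : a ∈ J (σ 2) := by
      have h := ha (σ 2); rwa [hbi, if_pos rfl, sub_zero] at h
    have hxa0 : x - a ∈ J (σ 0) := by
      have := (J (σ 0)).neg_mem ha0; rwa [neg_sub] at this
    have hxa1 : x - a ∈ J (σ 1) := by
      have := (J (σ 1)).neg_mem ha1; rwa [neg_sub] at this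
    exact TwoSidedIdeal.mem_sup.mpr
      ⟨x - a, by rw [TwoSidedIdeal.mem_inf]; exact ⟨hxa0, hxa1⟩, a, ha2, by abel⟩
  · refine sup_le (le_inf ?_ ?_) (le_inf le_sup_right le_sup_right)
    · exact le_trans inf_le_left le_sup_left
    · exact le_trans inf_le_right le_sup_left

/-- For a covering `(J 0, J 1, J 2)` of an associative unital ℂ-algebra `B`
by three two-sided ideals, the following are equivalent:
(i) the covering is complete;
(ii) `(J i + J k) ∩ (J j + J k) = (J i ∩ J j) + J k` for some permutation `(i,j,k)`;
(iii) the same identity for every permutation `(i,j,k)`.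
(Sums of two-sided ideals are their lattice sups.) -/
theorem three_ideal_covering_complete_iff
    {B : Type*} [Ring B] [Algebra ℂ B] (J : Fin 3 → TwoSidedIdeal B)
    (hcov : ∀ x : B, (∀ i, x ∈ J i) → x = 0) :
    ((∀ b : Fin 3 → B,
        (∀ i j, ∃ u ∈ J i, ∃ v ∈ J j, b i - b j = u + v) →
        ∃ a : B, ∀ i, a - b i ∈ J i) ↔
      (∃ σ : Equiv.Perm (Fin 3),
        (J (σ 0) ⊔ J (σ 2)) ⊓ (J (σ 1) ⊔ J (σ 2)) = (J (σ 0) ⊓ J (σ 1)) ⊔ J (σ 2))) ∧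
    ((∀ b : Fin 3 → B,
        (∀ i j, ∃ u ∈ J i, ∃ v ∈ J j, b i - b j = u + v) →
        ∃ a : B, ∀ i, a - b i ∈ J i) ↔
      (∀ σ : Equiv.Perm (Fin 3),
        (J (σ 0) ⊔ J (σ 2)) ⊓ (J (σ 1) ⊔ J (σ 2)) = (J (σ 0) ⊓ J (σ 1)) ⊔ J (σ 2))) := by
  constructor
  · constructor
    · intro hP
      exact ⟨1, complete_imp_perm_eq J hP 1⟩
    · rintro ⟨σ, H⟩
      exact perm_eq_imp_complete J σ H
  · constructor
    · intro hP
      exact complete_imp_perm_eq J hP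
    · intro H
      exact perm_eq_imp_complete J 1 (H 1)
end

section
/- Let A be a C*-algebra and let I, J, K be closed two-sided ideals of A. Then (I + K) ∩ (J + K) = (I ∩ J) + K; more generally, for closed two-sided ideals K, K₁, …, K_n of A one has ⋂_{j=1}^{n}(K_j + K) = (⋂_{j=1}^{n} K_j) + K. -/
/-! Every element `k` of an ideal `K` of a C⋆-algebra has approximate right units in `K`:
with `b = k⋆k`, the element `e = b (b + δ)⁻¹` lies in `K`, `‖1 - e‖ ≤ 1` and
`‖k - k e‖² = ‖δ² b (b + δ)⁻²‖ ≤ δ / 4`. Multiplying by such `e` shows, first, that for `x ∈ I`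
the distance from `x` to `I ∩ K` is at most its distance to `K`, which makes `I + K` closed
(the usual Cauchy-sequence argument for quotient norms); second, that `x = j + k ∈ I ∩ (J + K)` is
the limit of `x e + (k - k e) ∈ I ∩ J + K`. So `I ∩ (J + K) ⊆ I ∩ J + K`, the distributive law. -/

open Filter Finset Metric Topology
open scoped NNReal Pointwise

theorem isClosed_add_of_infDist_inter_le {E σ : Type*} [NormedAddCommGroup E] [CompleteSpace E]
    [SetLike σ E] [AddSubgroupClass σ E] {S T : σ} (hS : IsClosed (S : Set E))
    (hT : IsClosed (T : Set E)) (h : ∀ s ∈ S, infDist s ((S : Set E) ∩ T) ≤ infDist s T) :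
    IsClosed ((S : Set E) + (T : Set E)) := by
  refine isClosed_of_closure_subset fun x hx => ?_
  have approx (n : ℕ) : ∃ s ∈ S, ∃ t ∈ T, ‖x - (s + t)‖ < 2⁻¹ ^ n := by
    obtain ⟨-, ⟨s, hs, t, ht, rfl⟩, hxy⟩ := Metric.mem_closure_iff.mp hx (2⁻¹ ^ n) (by positivity)
    exact ⟨s, hs, t, ht, by rwa [← dist_eq_norm]⟩
  choose s hs t ht hst using approx
  have correct (n : ℕ) : ∃ c ∈ (S : Set E) ∩ T, ‖s (n + 1) - s n - c‖ < 2 * 2⁻¹ ^ n := by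
    have hds : s (n + 1) - s n ∈ S := sub_mem (hs _) (hs _)
    have hdt : -(t (n + 1) - t n) ∈ T := neg_mem (sub_mem (ht _) (ht _))
    have hlt : infDist (s (n + 1) - s n) ((S : Set E) ∩ T) < 2 * 2⁻¹ ^ n :=
      calc _ ≤ infDist (s (n + 1) - s n) T := h _ hds
        _ ≤ ‖(x - (s n + t n)) - (x - (s (n + 1) + t (n + 1)))‖ := by
          refine (infDist_le_dist_of_mem hdt).trans_eq ?_
          rw [dist_eq_norm]; congr 1; abel
        _ ≤ ‖x - (s n + t n)‖ + ‖x - (s (n + 1) + t (n + 1))‖ := norm_sub_le _ _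
        _ < 2⁻¹ ^ n + 2⁻¹ ^ (n + 1) := add_lt_add (hst n) (hst (n + 1))
        _ ≤ 2 * 2⁻¹ ^ n := by rw [pow_succ]; linarith [pow_pos (by norm_num : (0 : ℝ) < 2⁻¹) n]
    obtain ⟨c, hc, hdist⟩ :=
      (infDist_lt_iff (s := (S : Set E) ∩ T) ⟨0, zero_mem S, zero_mem T⟩).mp hlt
    exact ⟨c, hc, by rwa [← dist_eq_norm]⟩
  choose c hc hsc using correct
  -- Moving the corrections `c m ∈ S ∩ T` from the `S`-parts to the `T`-parts makes the former
  -- Cauchy without changing the sums.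
  set u : ℕ → E := fun n => s n - ∑ m ∈ range n, c m
  have hu : CauchySeq u := cauchySeq_of_le_geometric 2⁻¹ 2 (by norm_num) fun n => by
    have hstep : u (n + 1) - u n = s (n + 1) - s n - c n := by
      simp only [u, sum_range_succ]; abel
    rw [dist_comm, dist_eq_norm, hstep]
    exact (hsc n).le
  obtain ⟨L, hL⟩ := cauchySeq_tendsto_of_complete hu
  have hlim : Tendsto (fun n => s n + t n) atTop (𝓝 x) := by
    rw [tendsto_iff_norm_sub_tendsto_zero]
    refine squeeze_zero_norm (fun n => ?_) (tendsto_pow_atTop_nhds_zero_of_lt_one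
      (by norm_num : (0 : ℝ) ≤ 2⁻¹) (by norm_num))
    rw [norm_norm, norm_sub_rev]; exact (hst n).le
  refine ⟨L, hS.mem_of_tendsto hL
    (.of_forall fun n => sub_mem (hs n) (sum_mem fun m _ => (hc m).1)), x - L,
    hT.mem_of_tendsto (hlim.sub hL) (.of_forall fun n => ?_), add_sub_cancel _ _⟩
  simpa only [u, add_sub_sub_cancel, SetLike.mem_coe] using
    add_mem (ht n) (sum_mem fun m _ => (hc m).2)

namespace TwoSidedIdeal

theorem coe_sup {R : Type*} [NonUnitalNonAssocRing R] (I J : TwoSidedIdeal R) :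
    ((I ⊔ J : TwoSidedIdeal R) : Set R) = (I : Set R) + (J : Set R) :=
  Set.ext fun _ => mem_sup

theorem coe_iInf {R ι : Type*} [NonUnitalNonAssocRing R] (I : ι → TwoSidedIdeal R) :
    ((⨅ j, I j : TwoSidedIdeal R) : Set R) = ⋂ j, (I j : Set R) :=
  Set.ext fun _ => (mem_iInf R).trans Set.mem_iInter.symm

variable {A : Type*} [CStarAlgebra A]

theorem exists_mem_norm_sub_mul_le (K : TwoSidedIdeal A) {k : A} (hk : k ∈ K) {ε : ℝ}
    (hε : 0 < ε) : ∃ e ∈ K, ‖1 - e‖ ≤ 1 ∧ ‖k - k * e‖ ≤ ε := by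
  let := CStarAlgebra.spectralOrder A
  let := CStarAlgebra.spectralOrderedRing A
  lift ε to ℝ≥0 using hε.le
  norm_cast at hε
  set b := star k * k
  set δ : ℝ≥0 := 4 * ε ^ 2
  have hδ : 0 < δ := by positivity
  have hpos (t : ℝ≥0) : t + δ ≠ 0 := by positivity
  set e := cfc (fun t : ℝ≥0 => t / (t + δ)) b
  set u := cfc (fun t : ℝ≥0 => δ / (t + δ)) b
  have hu : 1 - e = u := by
    rw [sub_eq_iff_eq_add', ← cfc_add .., ← cfc_const_one ℝ≥0 b]
    refine cfc_congr fun t _ => ?_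
    rw [← add_div, div_self (hpos t)]
  have hδe : δ • e = b * u := by
    rw [← cfc_const_mul .., ← cfc_id' ℝ≥0 b, ← cfc_mul .., cfc_id' ℝ≥0 b]
    refine cfc_congr fun t _ => ?_
    rw [mul_div_assoc', mul_div_assoc', mul_comm]
  have heK : e ∈ K := by
    have : e = algebraMap ℝ≥0 A δ⁻¹ * (b * u) := by
      rw [← hδe, ← Algebra.smul_def, smul_smul, inv_mul_cancel₀ hδ.ne', one_smul]
    rw [this]
    exact K.mul_mem_left _ _ (K.mul_mem_right _ _ (K.mul_mem_left _ _ hk))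
  have hu_le : ‖u‖₊ ≤ 1 := nnnorm_cfc_nnreal_le fun t _ =>
    div_le_one_of_le₀ le_add_self (by positivity)
  refine ⟨e, heK, by rw [hu]; exact_mod_cast hu_le, ?_⟩
  have hsq :
      star (k * u) * (k * u) = cfc (fun t : ℝ≥0 => δ / (t + δ) * (t * (δ / (t + δ)))) b := by
    rw [cfc_mul .., cfc_mul (fun t => t) .., cfc_id' ℝ≥0 b, star_mul,
      (IsSelfAdjoint.of_nonneg (cfc_nonneg_of_predicate : 0 ≤ u)).star_eq, mul_assoc,
      ← mul_assoc (star k)]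
  have hbound : ‖k * u‖₊ ^ 2 ≤ ε ^ 2 := by
    rw [sq, ← CStarRing.nnnorm_star_mul_self, hsq]
    refine nnnorm_cfc_nnreal_le fun t _ => ?_
    have hε2 : ε ^ 2 = δ / 4 := by simp only [δ]; ring
    rw [hε2, ← NNReal.coe_le_coe]
    have ht : (0 : ℝ) ≤ t := t.2
    have hδ' : (0 : ℝ) < δ := hδ
    push_cast
    rw [show (δ : ℝ) / (t + δ) * (t * (δ / (t + δ))) = t * δ ^ 2 / (t + δ) ^ 2 by
      field_simp, div_le_div_iff₀ (by positivity) (by norm_num)]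
    nlinarith [mul_nonneg hδ'.le (sq_nonneg ((t : ℝ) - δ))]
  have : ‖k * u‖₊ ≤ ε :=
    (pow_le_pow_iff_left₀ (by positivity) (by positivity) two_ne_zero).mp hbound
  rw [← hu, mul_sub, mul_one] at this
  exact_mod_cast this

theorem infDist_inter_le_infDist (I K : TwoSidedIdeal A) {x : A} (hx : x ∈ I) :
    infDist x ((I : Set A) ∩ K) ≤ infDist x K := by
  refine (le_infDist ⟨0, K.zero_mem⟩).mpr fun k hk => le_of_forall_pos_le_add fun ε hε => ?_
  obtain ⟨e, heK, he, hke⟩ := K.exists_mem_norm_sub_mul_le hk hε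
  have hdecomp : x - x * e = (x - k) * (1 - e) + (k - k * e) := by noncomm_ring
  calc infDist x ((I : Set A) ∩ K) ≤ dist x (x * e) :=
        infDist_le_dist_of_mem ⟨I.mul_mem_right _ _ hx, K.mul_mem_left _ _ heK⟩
    _ ≤ ‖x - k‖ * ‖1 - e‖ + ‖k - k * e‖ := by
        rw [dist_eq_norm, hdecomp]
        exact (norm_add_le _ _).trans (by gcongr; exact norm_mul_le _ _)
    _ ≤ dist x k + ε := by
        rw [dist_eq_norm]
        gcongr
        exact mul_le_of_le_one_right (norm_nonneg _) he

theorem isClosed_sup {I K : TwoSidedIdeal A} (hI : IsClosed (I : Set A))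
    (hK : IsClosed (K : Set A)) : IsClosed ((I ⊔ K : TwoSidedIdeal A) : Set A) := by
  rw [coe_sup]
  exact isClosed_add_of_infDist_inter_le hI hK fun _ hx => infDist_inter_le_infDist I K hx

theorem inf_sup_le_of_isClosed {I J K : TwoSidedIdeal A} (hI : IsClosed (I : Set A))
    (hJ : IsClosed (J : Set A)) (hK : IsClosed (K : Set A)) : I ⊓ (J ⊔ K) ≤ I ⊓ J ⊔ K := by
  rintro _ ⟨hxI, hxJK⟩
  obtain ⟨j, hj, k, hk, rfl⟩ := mem_sup.mp hxJK
  refine (isClosed_sup (hI.inter hJ) hK).closure_subset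
    (Metric.mem_closure_iff.mpr fun ε hε => ?_)
  obtain ⟨e, heJ, -, hje⟩ := J.exists_mem_norm_sub_mul_le hj (half_pos hε)
  refine ⟨(j + k) * e + (k - k * e), mem_sup.mpr ⟨_, ⟨I.mul_mem_right _ _ hxI,
    J.mul_mem_left _ _ heJ⟩, _, K.sub_mem hk (K.mul_mem_right _ _ hk), rfl⟩, ?_⟩
  rw [dist_eq_norm, show j + k - ((j + k) * e + (k - k * e)) = j - j * e by noncomm_ring]
  exact hje.trans_lt (half_lt_self hε)

theorem sup_inf_sup_eq_of_isClosed {I J K : TwoSidedIdeal A} (hI : IsClosed (I : Set A))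
    (hJ : IsClosed (J : Set A)) (hK : IsClosed (K : Set A)) :
    (I ⊔ K) ⊓ (J ⊔ K) = I ⊓ J ⊔ K := by
  refine le_antisymm (fun x ⟨hxIK, hxJK⟩ => ?_) (sup_le (inf_le_inf le_sup_left le_sup_left)
    (le_inf le_sup_right le_sup_right))
  obtain ⟨a, ha, b, hb, rfl⟩ := mem_sup.mp hxIK
  have haJK : a ∈ J ⊔ K := by
    simpa using (J ⊔ K).sub_mem hxJK (mem_sup_right hb)
  exact (I ⊓ J ⊔ K).add_mem (inf_sup_le_of_isClosed hI hJ hK ⟨ha, haJK⟩) (mem_sup_right hb)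

theorem iInf_sup_eq_of_isClosed {ι : Type*} [Finite ι] {K : TwoSidedIdeal A}
    (𝒦 : ι → TwoSidedIdeal A) (hK : IsClosed (K : Set A)) (h𝒦 : ∀ j, IsClosed (𝒦 j : Set A)) :
    ⨅ j, (𝒦 j ⊔ K) = (⨅ j, 𝒦 j) ⊔ K := by
  induction ι using Finite.induction_empty_option with
  | of_equiv e ih =>
    rw [← e.iInf_comp, ← e.iInf_comp (g := 𝒦), ih _ fun j => h𝒦 (e j)]
  | h_empty => simp only [iInf_of_empty, top_sup_eq]
  | h_option ih =>
    have hclosed : IsClosed ((⨅ j, 𝒦 (some j) : TwoSidedIdeal A) : Set A) := by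
      rw [coe_iInf]; exact isClosed_iInter fun j => h𝒦 (some j)
    rw [iInf_option, iInf_option, ih _ fun j => h𝒦 (some j),
      sup_inf_sup_eq_of_isClosed (h𝒦 none) hclosed hK]

end TwoSidedIdeal

/-- In a C*-algebra, closed two-sided ideals satisfy
`(I + K) ∩ (J + K) = (I ∩ J) + K`, and more generally, for closed two-sided ideals
`K, K₁, …, K_n`, `⋂_{j=1}^n (K_j + K) = (⋂_{j=1}^n K_j) + K`
(sums of two-sided ideals being their lattice sups). -/
theorem cstar_closed_ideals_distributive
    {A : Type*} [NormedRing A] [StarRing A] [CStarRing A] [CompleteSpace A]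
    [NormedAlgebra ℂ A] [StarModule ℂ A] :
    (∀ I J K : TwoSidedIdeal A,
      IsClosed (I : Set A) → IsClosed (J : Set A) → IsClosed (K : Set A) →
      (I ⊔ K) ⊓ (J ⊔ K) = (I ⊓ J) ⊔ K) ∧
    (∀ (n : ℕ) (K : TwoSidedIdeal A) (𝒦 : Fin n → TwoSidedIdeal A),
      IsClosed (K : Set A) → (∀ j, IsClosed (𝒦 j : Set A)) →
      (⨅ j, (𝒦 j ⊔ K)) = (⨅ j, 𝒦 j) ⊔ K) := by
  let : CStarAlgebra A := {}
  exact ⟨fun _ _ _ hI hJ hK => TwoSidedIdeal.sup_inf_sup_eq_of_isClosed hI hJ hK,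
    fun _ _ 𝒦 hK h𝒦 => TwoSidedIdeal.iInf_sup_eq_of_isClosed 𝒦 hK h𝒦⟩
end

section
/- Let (B_i)_{i∈I} be a finite family of associative unital ℂ-algebras, (B_{ij})_{i,j∈I} a family of associative unital ℂ-algebras with B_{ij} = B_{ji} and B_{ii} = B_i, and let π^i_j : B_i → B_{ij} be surjective unital algebra homomorphisms with π^i_i = id. Let B = { (a_i)_{i∈I} ∈ ∏_{i∈I} B_i : π^i_j(a_i) = π^j_i(a_j) for all i, j } be the gluing, with p_i : B → B_i the restrictions of the canonical projections. Then (ker p_i)_{i∈I} is a complete covering of B: ⋂_{i∈I} ker p_i = {0}, and for every family (γ^{(i)})_{i∈I} of elements of B with γ^{(i)} − γ^{(j)} ∈ ker p_i + ker p_j for all i, j there exists γ ∈ B with γ − γ^{(i)} ∈ ker p_i for all i ∈ I. -/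
/-- Let `B = ⊕_{π^i_j} B_i` be the gluing of a finite family of associative
unital ℂ-algebras `B i` along surjective homomorphisms `π i j : B i → C i j` (with
`C i j` playing the role of `B_{ij}` and `ρ i j : B j → C i j` playing the role of
`π^j_i : B_j → B_{ji} = B_{ij}` under the identification `C i j ≃ C j i`).  Then the
family of kernels of the canonical projections `p i` is a complete covering of the gluing:
their intersection is zero, and every compatible family `(γ i)` with
`γ i - γ j ∈ ker p_i + ker p_j` comes from a single element `g` of the gluing with
`g - γ i ∈ ker p_i` for all `i`. -/
theorem gluing_kernels_form_complete_covering
    {ι : Type} [Fintype ι]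
    (B : ι → Type*) [∀ i, Ring (B i)] [∀ i, Algebra ℂ (B i)]
    (C : ι → ι → Type*) [∀ i j, Ring (C i j)] [∀ i j, Algebra ℂ (C i j)]
    (π : ∀ i j, B i →ₐ[ℂ] C i j) (ρ : ∀ i j, B j →ₐ[ℂ] C i j)
    (hsymm : ∀ i j, ∃ e : C i j ≃ₐ[ℂ] C j i,
      (∀ b, π j i b = e (ρ i j b)) ∧ (∀ b, ρ j i b = e (π i j b)))
    (hπ : ∀ i j, Function.Surjective (π i j))
    (hρ : ∀ i j, Function.Surjective (ρ i j)) :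
    (∀ a : ∀ i, B i, (∀ i j, i ≠ j → π i j (a i) = ρ i j (a j)) →
      (∀ i, a i = 0) → a = 0) ∧
    (∀ γ : ι → ∀ i, B i,
      (∀ k, ∀ i j, i ≠ j → π i j (γ k i) = ρ i j (γ k j)) →
      (∀ i j, ∃ u v : ∀ i, B i,
        (∀ i' j', i' ≠ j' → π i' j' (u i') = ρ i' j' (u j')) ∧
        (∀ i' j', i' ≠ j' → π i' j' (v i') = ρ i' j' (v j')) ∧
        u i = 0 ∧ v j = 0 ∧ γ i - γ j = u + v) →
      ∃ g : ∀ i, B i,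
        (∀ i j, i ≠ j → π i j (g i) = ρ i j (g j)) ∧
        ∀ i, (∀ i' j', i' ≠ j' →
            π i' j' ((g - γ i) i') = ρ i' j' ((g - γ i) j')) ∧ (g - γ i) i = 0) := by
  constructor
  · intro a _ h
    funext i; exact h i
  · intro γ hγ hcomp
    have hg : ∀ i j, i ≠ j → π i j (γ i i) = ρ i j (γ j j) := by
      intro i j hij
      obtain ⟨u, v, hu, hv, hui, hvj, huv⟩ := hcomp i j
      have h1 : γ i i = γ j i + v i := by
        have h2 := congrFun huv i
        simp only [Pi.sub_apply, Pi.add_apply, hui, zero_add] at h2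
        exact sub_eq_iff_eq_add'.mp h2
      rw [h1, map_add, hγ j i j hij, hv i j hij, hvj, map_zero, add_zero]
    refine ⟨fun i => γ i i, hg, fun i => ⟨?_, ?_⟩⟩
    · intro i' j' h
      simp only [Pi.sub_apply, map_sub, hg i' j' h, hγ i i' j' h]
    · simp
end

section
/- Let A = ℂ[x,y]/M³, where M = (x,y) is the ideal generated by x and y in the polynomial ring ℂ[x,y] (so M³ is the ideal generated by all monomials of degree 3). Let J₁, J₂, J₃ be the ideals of A generated by the images of x, y and x − y respectively. Then J₁ ∩ J₂ ∩ J₃ = {0} (so (J₁, J₂, J₃) is a covering of A), but this covering is not complete: the elements b₁ = x − y mod M³, b₂ = x − y mod M³, b₃ = x mod M³ satisfy b_i − b_j ∈ J_i + J_j for all i, j, yet there is no b ∈ A with b − b_i ∈ J_i for all i ∈ {1, 2, 3}. -/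
open MvPolynomial

/-- The polynomial ring ℂ[x,y]. -/
noncomputable abbrev PolyXY : Type := MvPolynomial (Fin 2) ℂ

/-- The maximal ideal M = (x, y) of ℂ[x,y]. -/
noncomputable def Mxy : Ideal PolyXY := Ideal.span {X 0, X 1}

/-- The algebra A = ℂ[x,y]/M³. -/
noncomputable abbrev Acut : Type := PolyXY ⧸ (Mxy ^ 3)

/-- The image of x in A. -/
noncomputable def xA : Acut := Ideal.Quotient.mk (Mxy ^ 3) (X 0)

/-- The image of y in A. -/
noncomputable def yA : Acut := Ideal.Quotient.mk (Mxy ^ 3) (X 1)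

/-- The ideals J₁ = (x), J₂ = (y), J₃ = (x-y) of A. -/
noncomputable def Jex : Fin 3 → Ideal Acut :=
  ![Ideal.span {xA}, Ideal.span {yA}, Ideal.span {xA - yA}]

/-- The elements b₁ = x - y, b₂ = x - y, b₃ = x of A. -/
noncomputable def bex : Fin 3 → Acut := ![xA - yA, xA - yA, xA]

/-! The coefficients of the monomials of degree at most two determine an element of
`ℂ[x,y]/M³`. An element that is a multiple of `x`, of `y` and of `x - y` has no constant or
linear part, and its quadratic part is divisible by `x`, `y` and `x - y`, hence vanishes.
Incompleteness is visible on linear parts already: if `b ≡ αx + βy` modulo `M²`, then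
`b ≡ x - y` modulo `x` and modulo `y` force `β = -1` and `α = 1`, whereas `b ≡ x` modulo
`x - y` forces `α + β = 1`. -/

theorem Ideal.Quotient.mk_mem_span_mk_singleton_iff {R : Type*} [CommRing R] {I : Ideal R}
    {p g : R} : mk I p ∈ Ideal.span {mk I g} ↔ ∃ q, p - q * g ∈ I := by
  rw [Ideal.mem_span_singleton', mk_surjective.exists]
  simp only [← map_mul, Ideal.Quotient.eq]
  exact exists_congr fun q => by rw [← neg_mem_iff, neg_sub]

namespace MvPolynomial

section CommSemiring

variable {R : Type*} [CommSemiring R]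

noncomputable def expXY (a b : ℕ) : Fin 2 →₀ ℕ := Finsupp.single 0 a + Finsupp.single 1 b

@[simp]
theorem expXY_apply_zero (a b : ℕ) : expXY a b 0 = a := by simp [expXY]

@[simp]
theorem expXY_apply_one (a b : ℕ) : expXY a b 1 = b := by simp [expXY]

theorem expXY_eq_iff {a b : ℕ} {d : Fin 2 →₀ ℕ} : expXY a b = d ↔ a = d 0 ∧ b = d 1 := by
  refine ⟨fun h => h ▸ by simp, fun ⟨ha, hb⟩ => ?_⟩
  ext i; fin_cases i <;> simp [ha, hb]

theorem degree_expXY (a b : ℕ) : (expXY a b).degree = a + b := by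
  simp [expXY, Finsupp.degree_single]

theorem mem_pow_idealOfVars_iff_coeff_expXY (n : ℕ) (p : MvPolynomial (Fin 2) R) :
    p ∈ idealOfVars (Fin 2) R ^ n ↔ ∀ a b, a + b < n → coeff (expXY a b) p = 0 := by
  rw [mem_pow_idealOfVars_iff']
  refine ⟨fun h a b hab => h _ (by rwa [degree_expXY]), fun h d hd => ?_⟩
  obtain ⟨a, b, rfl⟩ : ∃ a b, expXY a b = d := ⟨_, _, expXY_eq_iff.mpr ⟨rfl, rfl⟩⟩
  exact h _ _ (by rwa [degree_expXY] at hd)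

@[simp]
theorem coeff_expXY_X_zero (a b : ℕ) :
    coeff (expXY a b) (X 0 : MvPolynomial (Fin 2) R) = if a = 1 ∧ b = 0 then 1 else 0 := by
  classical
  simp [coeff_X, eq_comm (b := expXY a b), expXY_eq_iff]

@[simp]
theorem coeff_expXY_X_one (a b : ℕ) :
    coeff (expXY a b) (X 1 : MvPolynomial (Fin 2) R) = if a = 0 ∧ b = 1 then 1 else 0 := by
  classical
  simp [coeff_X, eq_comm (b := expXY a b), expXY_eq_iff]

@[simp]
theorem coeff_expXY_succ_mul_X_zero (p : MvPolynomial (Fin 2) R) (a b : ℕ) :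
    coeff (expXY (a + 1) b) (p * X 0) = coeff (expXY a b) p := by
  rw [← coeff_mul_X _ 0 p]; congr 1
  ext i; fin_cases i <;> simp [expXY]

@[simp]
theorem coeff_expXY_succ_mul_X_one (p : MvPolynomial (Fin 2) R) (a b : ℕ) :
    coeff (expXY a (b + 1)) (p * X 1) = coeff (expXY a b) p := by
  rw [← coeff_mul_X _ 1 p]; congr 1
  ext i; fin_cases i <;> simp [expXY]

@[simp]
theorem coeff_expXY_zero_mul_X_zero (p : MvPolynomial (Fin 2) R) (b : ℕ) :
    coeff (expXY 0 b) (p * X 0) = 0 := by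
  classical
  rw [coeff_mul_X', if_neg]; simp

@[simp]
theorem coeff_expXY_zero_mul_X_one (p : MvPolynomial (Fin 2) R) (a : ℕ) :
    coeff (expXY a 0) (p * X 1) = 0 := by
  classical
  rw [coeff_mul_X', if_neg]; simp

end CommSemiring

variable {R : Type*} [CommRing R] {p q r s : MvPolynomial (Fin 2) R}

theorem mem_pow_three_of_sub_mul_mem
    (hq : p - q * X 0 ∈ idealOfVars (Fin 2) R ^ 3) (hr : p - r * X 1 ∈ idealOfVars (Fin 2) R ^ 3)
    (hs : p - s * (X 0 - X 1) ∈ idealOfVars (Fin 2) R ^ 3) : p ∈ idealOfVars (Fin 2) R ^ 3 := by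
  simp only [mem_pow_idealOfVars_iff_coeff_expXY] at *
  have hp0 (b : ℕ) (hb : b < 3) : coeff (expXY 0 b) p = 0 := by simpa using hq 0 b (by omega)
  have hp1 (a : ℕ) (ha : a < 3) : coeff (expXY a 0) p = 0 := by simpa using hr a 0 (by omega)
  have hs10 : coeff (expXY 1 0) s = 0 := by simpa [mul_sub, hp1] using hs 2 0 (by norm_num)
  have hs01 : coeff (expXY 0 1) s = 0 := by simpa [mul_sub, hp0] using hs 0 2 (by norm_num)
  have hp11 : coeff (expXY 1 1) p = 0 := by simpa [mul_sub, hs10, hs01] using hs 1 1 (by norm_num)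
  intro a b hab
  match a, b with
  | 0, b => exact hp0 b (by omega)
  | a + 1, 0 => exact hp1 (a + 1) hab
  | 1, 1 => exact hp11
  | a + 2, b + 1 | a + 1, b + 2 => omega

theorem false_of_sub_mul_mem_pow_two [Nontrivial R]
    (hq : p - (X 0 - X 1) - q * X 0 ∈ idealOfVars (Fin 2) R ^ 2)
    (hr : p - (X 0 - X 1) - r * X 1 ∈ idealOfVars (Fin 2) R ^ 2)
    (hs : p - X 0 - s * (X 0 - X 1) ∈ idealOfVars (Fin 2) R ^ 2) : False := by
  simp only [mem_pow_idealOfVars_iff_coeff_expXY] at *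
  have hq01 : coeff (expXY 0 1) p + 1 = 0 := by simpa [mul_sub] using hq 0 1 (by norm_num)
  have hr10 : coeff (expXY 1 0) p - 1 = 0 := by simpa [mul_sub] using hr 1 0 (by norm_num)
  have hs10 : coeff (expXY 1 0) p - 1 - coeff (expXY 0 0) s = 0 := by
    simpa [mul_sub] using hs 1 0 (by norm_num)
  have hs01 : coeff (expXY 0 1) p + coeff (expXY 0 0) s = 0 := by
    simpa [mul_sub] using hs 0 1 (by norm_num)
  have h : (1 : R) = 0 := by linear_combination hq01 + hr10 - hs10 - hs01
  exact one_ne_zero h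

end MvPolynomial

open Ideal.Quotient

theorem Mxy_eq_idealOfVars : Mxy = idealOfVars (Fin 2) ℂ := by
  rw [Mxy, idealOfVars]
  congr 1
  ext f
  simp [Fin.exists_fin_two, eq_comm]

theorem Jex_zero : Jex 0 = Ideal.span {mk (Mxy ^ 3) (X 0)} := rfl

theorem Jex_one : Jex 1 = Ideal.span {mk (Mxy ^ 3) (X 1)} := rfl

theorem Jex_two : Jex 2 = Ideal.span {mk (Mxy ^ 3) (X 0 - X 1)} := by
  rw [map_sub]; rfl

theorem bex_zero : bex 0 = mk (Mxy ^ 3) (X 0 - X 1) := by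
  rw [map_sub]; rfl

theorem bex_one : bex 1 = mk (Mxy ^ 3) (X 0 - X 1) := by
  rw [map_sub]; rfl

theorem bex_two : bex 2 = mk (Mxy ^ 3) (X 0) := rfl

-- Each difference is `0` or `±y`, and `y` lies in the ideal generated by any two of
-- `x`, `y`, `x - y`.
theorem bex_sub_mem_Jex_sup (i j : Fin 3) : bex i - bex j ∈ Jex i + Jex j := by
  fin_cases i <;> fin_cases j <;>
    simp [bex, Jex, Submodule.add_eq_sup, ← Ideal.span_insert, Submodule.mem_span_of_mem]

theorem Jex_inf_eq_bot : Jex 0 ⊓ Jex 1 ⊓ Jex 2 = ⊥ := by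
  refine eq_bot_iff.mpr fun a ha => ?_
  obtain ⟨p, rfl⟩ := mk_surjective a
  simp only [Submodule.mem_inf, Jex_zero, Jex_one, Jex_two, mk_mem_span_mk_singleton_iff,
    Mxy_eq_idealOfVars] at ha
  obtain ⟨⟨⟨q, hq⟩, ⟨r, hr⟩⟩, ⟨s, hs⟩⟩ := ha
  rw [Submodule.mem_bot, eq_zero_iff_mem, Mxy_eq_idealOfVars]
  exact mem_pow_three_of_sub_mul_mem hq hr hs

theorem not_exists_sub_bex_mem_Jex : ¬ ∃ b : Acut, ∀ i, b - bex i ∈ Jex i := by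
  rintro ⟨b, hb⟩
  obtain ⟨p, rfl⟩ := mk_surjective b
  have h0 := hb 0
  have h1 := hb 1
  have h2 := hb 2
  simp only [Jex_zero, Jex_one, Jex_two, bex_zero, bex_one, bex_two, ← map_sub,
    mk_mem_span_mk_singleton_iff, Mxy_eq_idealOfVars] at h0 h1 h2
  obtain ⟨q, hq⟩ := h0
  obtain ⟨r, hr⟩ := h1
  obtain ⟨s, hs⟩ := h2
  have h32 := Ideal.pow_le_pow_right (I := idealOfVars (Fin 2) ℂ) (by norm_num : 2 ≤ 3)
  exact false_of_sub_mul_mem_pow_two (h32 hq) (h32 hr) (h32 hs)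

/-- In A = ℂ[x,y]/M³ the ideals J₁ = (x), J₂ = (y), J₃ = (x-y) form a
covering which is not complete: the triple (x-y, x-y, x) is pairwise compatible but has
no simultaneous approximant modulo the three ideals. -/
theorem noncomplete_covering_example :
    (Jex 0 ⊓ Jex 1 ⊓ Jex 2 = ⊥) ∧
    (∀ i j, bex i - bex j ∈ Jex i + Jex j) ∧
    ¬ ∃ b : Acut, ∀ i, b - bex i ∈ Jex i :=
  ⟨Jex_inf_eq_bot, bex_sub_mem_Jex_sup, not_exists_sub_bex_mem_Jex⟩
end
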